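/- Let c ∈ ℂ with c ≠ 0, let k₁, k₂ ∈ ℂ with (k₁,k₂) ≠ (0,0), and set a = 1, b = 0. The ℂ-bilinear product ∘ on A defined on basis elements by L_m∘L_n = cL_{m+n+1} − (n+1)L_{m+n}, L_m∘W_n = cW_{m+n+1} − (n+1)W_{m+n}, W_m∘L_n = cW_{m+n+1} and W_m∘W_n = k₁L_{m+n+1} + k₂W_{m+n+1} is left-symmetric, and it is a compatible left-symmetric algebraic structure on the Lie algebra Coeff(W(1,0)). -/

import Mathlib

/-! Both identities are multilinear in their arguments, so it suffices to check them on the basis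
vectors `L m`, `W m`, where each is a direct computation with the structure constants. -/

noncomputable section

/-- `A` is the free `ℂ`-vector space with basis `{L m : m ∈ ℤ} ∪ {W m : m ∈ ℤ}`. -/
abbrev A : Type := (ℤ ⊕ ℤ) →₀ ℂ

/-- The basis vector `L m`. -/
def L (m : ℤ) : A := Finsupp.single (Sum.inl m) 1

/-- The basis vector `W m`. -/
def W (m : ℤ) : A := Finsupp.single (Sum.inr m) 1

namespace LinearMap

variable {R V ι : Type*} [CommSemiring R] [AddCommGroup V] [Module R V]

def associator (μ : V →ₗ[R] V →ₗ[R] V) : V →ₗ[R] V →ₗ[R] V →ₗ[R] V :=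
  μ.compr₂ μ - ((llcomp R V V V).comp μ).compl₂ μ

@[simp]
theorem associator_apply (μ : V →ₗ[R] V →ₗ[R] V) (x y z : V) :
    associator μ x y z = μ (μ x y) z - μ x (μ y z) :=
  rfl

theorem associator_comm_of_basis (b : Module.Basis ι R V) (μ : V →ₗ[R] V →ₗ[R] V)
    (h : ∀ i j k, associator μ (b i) (b j) (b k) = associator μ (b j) (b i) (b k)) (x y z : V) :
    associator μ x y z = associator μ y x z :=
  congr($(ext_basis b b (B' := (associator μ).flip) fun i j => b.ext (h i j)) x y z)

theorem commutator_eq_of_basis (b : Module.Basis ι R V) (μ β : V →ₗ[R] V →ₗ[R] V)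
    (h : ∀ i j, μ (b i) (b j) - μ (b j) (b i) = β (b i) (b j)) (x y : V) :
    μ x y - μ y x = β x y :=
  congr($(ext_basis b b (B := μ - μ.flip) h) x y)

end LinearMap

@[simp]
theorem basisSingleOne_inl (m : ℤ) : (Finsupp.basisSingleOne (Sum.inl m) : A) = L m := rfl

@[simp]
theorem basisSingleOne_inr (m : ℤ) : (Finsupp.basisSingleOne (Sum.inr m) : A) = W m := rfl

theorem associator_basisSingleOne_comm {c k₁ k₂ : ℂ} (M : A →ₗ[ℂ] A →ₗ[ℂ] A)
    (hLL : ∀ m n : ℤ, M (L m) (L n) = c • L (m + n + 1) - ((n : ℂ) + 1) • L (m + n))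
    (hLW : ∀ m n : ℤ, M (L m) (W n) = c • W (m + n + 1) - ((n : ℂ) + 1) • W (m + n))
    (hWL : ∀ m n : ℤ, M (W m) (L n) = c • W (m + n + 1))
    (hWW : ∀ m n : ℤ, M (W m) (W n) = k₁ • L (m + n + 1) + k₂ • W (m + n + 1))
    (i j k : ℤ ⊕ ℤ) :
    M.associator (Finsupp.basisSingleOne i) (Finsupp.basisSingleOne j) (Finsupp.basisSingleOne k) =
      M.associator (Finsupp.basisSingleOne j) (Finsupp.basisSingleOne i)
        (Finsupp.basisSingleOne k) := by
  rcases i with m | m <;> rcases j with n | n <;> rcases k with p | p <;>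
    simp only [basisSingleOne_inl, basisSingleOne_inr, LinearMap.associator_apply, map_smul,
      map_sub, map_add, LinearMap.smul_apply, LinearMap.sub_apply, LinearMap.add_apply,
      hLL, hLW, hWL, hWW] <;>
    ring_nf <;> module

theorem commutator_basisSingleOne_eq {c k₁ k₂ : ℂ} (M B : A →ₗ[ℂ] A →ₗ[ℂ] A)
    (hLL : ∀ m n : ℤ, M (L m) (L n) = c • L (m + n + 1) - ((n : ℂ) + 1) • L (m + n))
    (hLW : ∀ m n : ℤ, M (L m) (W n) = c • W (m + n + 1) - ((n : ℂ) + 1) • W (m + n))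
    (hWL : ∀ m n : ℤ, M (W m) (L n) = c • W (m + n + 1))
    (hWW : ∀ m n : ℤ, M (W m) (W n) = k₁ • L (m + n + 1) + k₂ • W (m + n + 1))
    (hBLL : ∀ m n : ℤ, B (L m) (L n) = ((m : ℂ) - (n : ℂ)) • L (m + n))
    (hBLW : ∀ m n : ℤ, B (L m) (W n) = -((n : ℂ) + 1) • W (m + n))
    (hBWL : ∀ m n : ℤ, B (W n) (L m) = -B (L m) (W n))
    (hBWW : ∀ m n : ℤ, B (W m) (W n) = 0) (i j : ℤ ⊕ ℤ) :
    M (Finsupp.basisSingleOne i) (Finsupp.basisSingleOne j)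
        - M (Finsupp.basisSingleOne j) (Finsupp.basisSingleOne i) =
      B (Finsupp.basisSingleOne i) (Finsupp.basisSingleOne j) := by
  rcases i with m | m <;> rcases j with n | n <;>
    simp only [basisSingleOne_inl, basisSingleOne_inr, hLL, hLW, hWL, hWW, hBLL, hBLW, hBWL,
      hBWW] <;>
    ring_nf <;> module

theorem stmt18_general (c k₁ k₂ : ℂ)
    -- `M` is the ℂ-bilinear product `∘` given on basis elements by:
    (M : A →ₗ[ℂ] A →ₗ[ℂ] A)
    (hLL : ∀ m n : ℤ, M (L m) (L n) = c • L (m + n + 1) - ((n : ℂ) + 1) • L (m + n))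
    (hLW : ∀ m n : ℤ, M (L m) (W n) = c • W (m + n + 1) - ((n : ℂ) + 1) • W (m + n))
    (hWL : ∀ m n : ℤ, M (W m) (L n) = c • W (m + n + 1))
    (hWW : ∀ m n : ℤ, M (W m) (W n) = k₁ • L (m + n + 1) + k₂ • W (m + n + 1))
    -- `B` is the ℂ-bilinear Lie bracket of Coeff(W(a,b)) on basis elements:
    (B : A →ₗ[ℂ] A →ₗ[ℂ] A)
    (hBLL : ∀ m n : ℤ, B (L m) (L n) = ((m : ℂ) - (n : ℂ)) • L (m + n))
    (hBLW : ∀ m n : ℤ, B (L m) (W n) =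
      (((m : ℂ) + 1) * ((1 : ℂ) - 1) - ((n : ℂ) + 1)) • W (m + n)
        + (0 : ℂ) • W (m + n + 1))
    (hBWL : ∀ m n : ℤ, B (W n) (L m) = -B (L m) (W n))
    (hBWW : ∀ m n : ℤ, B (W m) (W n) = 0) :
    -- `∘ = M` is left-symmetric:
    ((∀ x y z : A, M (M x y) z - M x (M y z) = M (M y x) z - M y (M x z)) ∧
    -- and compatible with the Lie bracket:
    (∀ x y : A, M x y - M y x = B x y)) := by
  have hcomm := commutator_basisSingleOne_eq M B hLL hLW hWL hWW hBLL
    (fun m n => by simp [hBLW]) hBWL hBWW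
  have hsymm := LinearMap.associator_comm_of_basis _ M
    (associator_basisSingleOne_comm M hLL hLW hWL hWW)
  exact ⟨fun x y z => by simpa using hsymm x y z, LinearMap.commutator_eq_of_basis _ M B hcomm⟩

/-- Corollary 3.8 (10), on Coeff(W(1,0)), with `c ≠ 0`, `(k₁,k₂) ≠ (0,0)`. -/
theorem stmt18 (c k₁ k₂ : ℂ) (hc : c ≠ 0) (hk : (k₁, k₂) ≠ (0, 0))
    -- `M` is the ℂ-bilinear product `∘` given on basis elements by:
    (M : A →ₗ[ℂ] A →ₗ[ℂ] A)
    (hLL : ∀ m n : ℤ, M (L m) (L n) = c • L (m + n + 1) - ((n : ℂ) + 1) • L (m + n))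
    (hLW : ∀ m n : ℤ, M (L m) (W n) = c • W (m + n + 1) - ((n : ℂ) + 1) • W (m + n))
    (hWL : ∀ m n : ℤ, M (W m) (L n) = c • W (m + n + 1))
    (hWW : ∀ m n : ℤ, M (W m) (W n) = k₁ • L (m + n + 1) + k₂ • W (m + n + 1))
    -- `B` is the ℂ-bilinear Lie bracket of Coeff(W(a,b)) on basis elements:
    (B : A →ₗ[ℂ] A →ₗ[ℂ] A)
    (hBLL : ∀ m n : ℤ, B (L m) (L n) = ((m : ℂ) - (n : ℂ)) • L (m + n))
    (hBLW : ∀ m n : ℤ, B (L m) (W n) =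
      (((m : ℂ) + 1) * ((1 : ℂ) - 1) - ((n : ℂ) + 1)) • W (m + n)
        + (0 : ℂ) • W (m + n + 1))
    (hBWL : ∀ m n : ℤ, B (W n) (L m) = -B (L m) (W n))
    (hBWW : ∀ m n : ℤ, B (W m) (W n) = 0) :
    -- `∘ = M` is left-symmetric:
    ((∀ x y z : A, M (M x y) z - M x (M y z) = M (M y x) z - M y (M x z)) ∧
    -- and compatible with the Lie bracket:
    (∀ x y : A, M x y - M y x = B x y)) :=
  stmt18_general c k₁ k₂ M hLL hLW hWL hWW B hBLL hBLW hBWL hBWW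

end
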